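/- Let A, B be nonzero integers, Δ = A² − 4B, u_n, v_n the Lucas sequence and its companion, and w_n the largest divisor of u_n coprime to u_1, ..., u_{n-1}. Then for every n ≥ 5, ∑_{j=1}^{n-1} v_j/u_j ≡ ((n²−1)Δ/6)·(u_n/v_n) (mod w_n²), meaning: v_n·∏_{j=1}^{n-1} u_j is coprime to w_n, and w_n² divides the integer 6·v_n·∏_{j=1}^{n-1}u_j·∑_{j=1}^{n-1} v_j/u_j − (n²−1)Δ·u_n·∏_{j=1}^{n-1}u_j, noting also gcd(w_n, 6) = 1. -/

import Mathlib

/-- The Lucas sequence u_n for parameters (A, B). -/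
def lucasU (A B : ℤ) : ℕ → ℤ
  | 0 => 0
  | 1 => 1
  | n + 2 => A * lucasU A B (n + 1) - B * lucasU A B n

/-- The companion Lucas sequence v_n for parameters (A, B). -/
def lucasV (A B : ℤ) : ℕ → ℤ
  | 0 => 2
  | 1 => A
  | n + 2 => A * lucasV A B (n + 1) - B * lucasV A B n

/-- `w` is the largest (positive) divisor of `u_n` coprime to `u_1, …, u_{n-1}`. -/
def IsWn (A B : ℤ) (n : ℕ) (w : ℤ) : Prop :=
  0 < w ∧ w ∣ lucasU A B n ∧ (∀ k, 1 ≤ k → k < n → IsCoprime w (lucasU A B k)) ∧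
    ∀ d : ℤ, 0 < d → d ∣ lucasU A B n →
      (∀ k, 1 ≤ k → k < n → IsCoprime d (lucasU A B k)) → d ≤ w

/-!
Work modulo `w`, where `u_n ≡ 0` and `u_1, …, u_{n-1}` are units, and put `r_j = v_j / u_j`,
`Δ = A² - 4B`. The addition formulas for `u` and `v` make `r` behave like a cotangent on
`ℤ/nℤ`: `r_{n-j} = -r_j` and `r_{j+k} (r_j + r_k) = r_j r_k + Δ`. The classical evaluation of
`∑ cot² (π j / n)` then gives `3 ∑ r_j² = -(n-1)(n-2) Δ`, and since
`2 v_n / (u_j u_{n-j}) ≡ Δ - r_j²`, this determines `6 v_n ∑ 1 / (u_j u_{n-j})` modulo `w`.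
Pairing `j` with `n - j` gives the exact identity `∑ v_j / u_j = u_n ∑ 1 / (u_j u_{n-j})`,
and the factor `u_n ≡ 0` lifts the congruence to `w²`.

That `w` is prime to `6` comes from `w` being prime to `u_2 = A`, `u_3 = A² - B`,
`u_4 = A (A² - 2B)` and (since `u_n ≡ A^{n-1} mod B`) to `B`, while
`6 ∣ A B (A² - B) (A² - 2B)`.
-/

open Finset

-- Prototype: `G = ZMod n`, `r x = cot (π x / n)`, `D = -1`. The correlation
-- `∑ y, r (x + y) * r y` is evaluated for `x ≠ 0` by the addition law, then summed over `x`.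
theorem three_mul_sum_sq_of_cot_add {G R : Type*} [AddCommGroup G] [Fintype G] [DecidableEq G]
    [CommRing R] (r : G → R) (D : R) (h2 : IsUnit (2 : R)) (hneg : ∀ x, r (-x) = -r x)
    (hadd : ∀ x y, x ≠ 0 → y ≠ 0 → x + y ≠ 0 →
      r (x + y) * (r x + r y) = r x * r y + D) :
    3 * ∑ x, r x ^ 2 = -(((Fintype.card G : R) - 1) * ((Fintype.card G : R) - 2)) * D := by
  have h0 : r 0 = 0 := h2.mul_left_cancel <| by
    have := hneg 0
    rw [neg_zero] at this
    linear_combination this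
  have hsum : ∑ x, r x = 0 := h2.mul_left_cancel <| by
    have := Equiv.sum_comp (Equiv.neg G) r
    simp only [Equiv.neg_apply, hneg, sum_neg_distrib] at this
    linear_combination -this
  have hshift_left : ∀ x, ∑ y, r (x + y) = 0 := fun x =>
    (Equiv.sum_comp (Equiv.addLeft x) r).trans hsum
  have hshift_right : ∀ y, ∑ x, r (x + y) = 0 := fun y =>
    (Equiv.sum_comp (Equiv.addRight y) r).trans hsum
  have hcorr : ∀ x ≠ 0, ∑ y, r (x + y) * r y = 2 * r x ^ 2 + (Fintype.card G - 2) * D := by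
    intro x hx
    have key : ∑ y, (r x * r y + D - r (x + y) * (r x + r y)) = 2 * (D - r x ^ 2) := by
      rw [Fintype.sum_eq_add 0 (-x) (by simpa [eq_comm] using hx)
        fun y ⟨hy0, hyx⟩ => by
          rw [hadd x y hx hy0 fun h => hyx (eq_neg_of_add_eq_zero_right h)]; ring]
      simp only [add_zero, add_neg_cancel, h0, hneg]
      ring
    simp only [sum_sub_distrib, sum_add_distrib, mul_add, ← mul_sum,
      ← sum_mul, hsum, hshift_left, sum_const, card_univ, nsmul_eq_mul] at key
    linear_combination -key
  have htotal : ∑ x, ∑ y, r (x + y) * r y = 0 := by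
    rw [sum_comm]
    simp only [← sum_mul, hshift_right, zero_mul, sum_const_zero]
  have hsingle : ∑ x, (∑ y, r (x + y) * r y - 2 * r x ^ 2 - (Fintype.card G - 2) * D)
      = ∑ y, r y ^ 2 - (Fintype.card G - 2) * D := by
    rw [Fintype.sum_eq_single 0 fun x hx => by rw [hcorr x hx]; ring]
    simp only [zero_add, h0, sq, mul_zero, sub_zero]
  simp only [sum_sub_distrib, htotal, ← mul_sum, sum_const, card_univ,
    nsmul_eq_mul] at hsingle
  linear_combination -hsingle

section Lucas

variable (A B : ℤ)

local notation "u" => lucasU A B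
local notation "v" => lucasV A B

theorem lucasU_add_two (n : ℕ) : u (n + 2) = A * u (n + 1) - B * u n := rfl

theorem lucasV_add_two (n : ℕ) : v (n + 2) = A * v (n + 1) - B * v n := rfl

theorem lucasV_eq_two_mul_lucasU_succ_sub (n : ℕ) : v n = 2 * u (n + 1) - A * u n := by
  induction n using Nat.twoStepInduction with
  | zero => simp [lucasU, lucasV]
  | one => simp only [lucasU, lucasV]; ring
  | more n ih₁ ih₂ =>
    rw [lucasV_add_two, lucasU_add_two A B (n + 1), ih₁, ih₂, lucasU_add_two]; ring

theorem lucasU_cassini (n : ℕ) : u (n + 1) ^ 2 - A * u (n + 1) * u n + B * u n ^ 2 = B ^ n := by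
  induction n with
  | zero => simp [lucasU]
  | succ n ih => rw [lucasU_add_two]; linear_combination B * ih

theorem lucasV_sq_sub (n : ℕ) : v n ^ 2 - (A ^ 2 - 4 * B) * u n ^ 2 = 4 * B ^ n := by
  linear_combination (2 * u (n + 1) - A * u n + v n) * lucasV_eq_two_mul_lucasU_succ_sub A B n
    + 4 * lucasU_cassini A B n

theorem two_mul_lucasU_add (m n : ℕ) : 2 * u (m + n) = u m * v n + v m * u n := by
  induction m using Nat.twoStepInduction with
  | zero => simp [lucasU, lucasV]
  | one => rw [add_comm, lucasV_eq_two_mul_lucasU_succ_sub]; simp only [lucasU, lucasV]; ring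
  | more m ih₁ ih₂ =>
    rw [show m + 2 + n = m + n + 2 by ring, lucasU_add_two, show m + n + 1 = m + 1 + n by ring,
      lucasU_add_two, lucasV_add_two]
    linear_combination A * ih₂ - B * ih₁

theorem two_mul_lucasV_add (m n : ℕ) :
    2 * v (m + n) = v m * v n + (A ^ 2 - 4 * B) * u m * u n := by
  induction m using Nat.twoStepInduction with
  | zero => simp [lucasU, lucasV]
  | one =>
    rw [add_comm, lucasV_eq_two_mul_lucasU_succ_sub A B (n + 1),
      lucasV_eq_two_mul_lucasU_succ_sub A B n, lucasU_add_two]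
    simp only [lucasU, lucasV]; ring
  | more m ih₁ ih₂ =>
    rw [show m + 2 + n = m + n + 2 by ring, lucasV_add_two, show m + n + 1 = m + 1 + n by ring,
      lucasU_add_two, lucasV_add_two]
    linear_combination A * ih₂ - B * ih₁

theorem lucasU_add_mul_lucasV_sub (m n : ℕ) :
    u (m + n) * v n - v (m + n) * u n = 2 * B ^ n * u m :=
  mul_left_cancel₀ two_ne_zero <| by
    linear_combination v n * two_mul_lucasU_add A B m n - u n * two_mul_lucasV_add A B m n
      + u m * lucasV_sq_sub A B n

theorem dvd_lucasU_succ_sub_pow (n : ℕ) : B ∣ u (n + 1) - A ^ n := by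
  induction n with
  | zero => simp [lucasU]
  | succ n ih =>
    rw [lucasU_add_two, show A * u (n + 1) - B * u n - A ^ (n + 1)
      = A * (u (n + 1) - A ^ n) - B * u n by ring]
    exact (dvd_mul_of_dvd_right ih A).sub (dvd_mul_right B _)

theorem lucasU_two : u 2 = A := by simp [lucasU]

theorem lucasU_three : u 3 = A ^ 2 - B := by simp only [lucasU]; ring

theorem lucasU_four : u 4 = A * (A ^ 2 - 2 * B) := by simp only [lucasU]; ring

end Lucas

-- `v_j / u_j`; `Ring.inverse` makes it `0` when `u_j` is not a unit, e.g. at `j = 0`.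
noncomputable def lucasRatio (R : Type*) [CommRing R] (A B : ℤ) (j : ℕ) : R :=
  lucasV A B j * Ring.inverse (lucasU A B j : R)

section Ratio

variable {R : Type*} [CommRing R] (A B : ℤ)

theorem lucasRatio_zero : lucasRatio R A B 0 = 0 := by simp [lucasRatio, lucasU]

theorem lucasV_cast_eq_lucasRatio_mul {j : ℕ} (hj : IsUnit (lucasU A B j : R)) :
    (lucasV A B j : R) = lucasRatio R A B j * lucasU A B j := by
  rw [lucasRatio, mul_assoc, Ring.inverse_mul_cancel _ hj, mul_one]

theorem lucasRatio_add {j k : ℕ} (hj : IsUnit (lucasU A B j : R))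
    (hk : IsUnit (lucasU A B k : R)) (hjk : IsUnit (lucasU A B (j + k) : R)) :
    lucasRatio R A B (j + k) * (lucasRatio R A B j + lucasRatio R A B k)
      = lucasRatio R A B j * lucasRatio R A B k + (A ^ 2 - 4 * B) := by
  have e := congrArg (Int.cast : ℤ → R) <|
    show lucasV A B (j + k) * (lucasU A B j * lucasV A B k + lucasV A B j * lucasU A B k)
      = lucasU A B (j + k) * (lucasV A B j * lucasV A B k
          + (A ^ 2 - 4 * B) * lucasU A B j * lucasU A B k) by
    linear_combination lucasU A B (j + k) * two_mul_lucasV_add A B j k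
      - lucasV A B (j + k) * two_mul_lucasU_add A B j k
  push_cast at e
  rw [lucasV_cast_eq_lucasRatio_mul A B hj, lucasV_cast_eq_lucasRatio_mul A B hk,
    lucasV_cast_eq_lucasRatio_mul A B hjk] at e
  apply ((hjk.mul hj).mul hk).mul_left_cancel
  linear_combination e

theorem lucasRatio_sub_eq_neg {n j : ℕ} (hjn : j ≤ n) (hun : (lucasU A B n : R) = 0)
    (hj : IsUnit (lucasU A B j : R)) (hnj : IsUnit (lucasU A B (n - j) : R)) :
    lucasRatio R A B (n - j) = -lucasRatio R A B j := by
  have e := congrArg (Int.cast : ℤ → R) (two_mul_lucasU_add A B j (n - j))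
  rw [Nat.add_sub_cancel' hjn] at e
  push_cast at e
  rw [hun, lucasV_cast_eq_lucasRatio_mul A B hj, lucasV_cast_eq_lucasRatio_mul A B hnj] at e
  apply (hj.mul hnj).mul_left_cancel
  linear_combination -e

theorem two_mul_lucasV_mul_inverse_mul_inverse {n j : ℕ} (hjn : j ≤ n)
    (hun : (lucasU A B n : R) = 0) (hj : IsUnit (lucasU A B j : R))
    (hnj : IsUnit (lucasU A B (n - j) : R)) :
    2 * (lucasV A B n : R) *
        (Ring.inverse (lucasU A B j : R) * Ring.inverse (lucasU A B (n - j) : R))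
      = (A ^ 2 - 4 * B) - lucasRatio R A B j ^ 2 := by
  have e := congrArg (Int.cast : ℤ → R) <|
    show (lucasV A B j ^ 2 - (A ^ 2 - 4 * B) * lucasU A B j ^ 2) * lucasU A B (n - j)
        + 2 * lucasV A B n * lucasU A B j = 2 * lucasU A B n * lucasV A B j by
      have := lucasU_add_mul_lucasV_sub A B (n - j) j
      rw [Nat.sub_add_cancel hjn] at this
      linear_combination lucasU A B (n - j) * lucasV_sq_sub A B j - 2 * this
  push_cast at e
  rw [hun, lucasV_cast_eq_lucasRatio_mul A B hj] at e
  apply ((hj.pow 2).mul hnj).mul_left_cancel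
  linear_combination e + 2 * (lucasV A B n : R) * lucasU A B j * lucasU A B (n - j)
      * Ring.inverse (lucasU A B (n - j) : R) * Ring.mul_inverse_cancel _ hj
    + 2 * (lucasV A B n : R) * lucasU A B j * Ring.mul_inverse_cancel _ hnj

theorem isUnit_lucasU_val {n : ℕ} [NeZero n]
    (hunit : ∀ j ∈ Ico 1 n, IsUnit (lucasU A B j : R)) {a : Fin n} (ha : a ≠ 0) :
    IsUnit (lucasU A B a : R) :=
  hunit _ (mem_Ico.2 ⟨Nat.pos_of_ne_zero (Fin.val_ne_zero_iff.2 ha), a.isLt⟩)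

theorem lucasRatio_val_neg {n : ℕ} [NeZero n] (hun : (lucasU A B n : R) = 0)
    (hunit : ∀ j ∈ Ico 1 n, IsUnit (lucasU A B j : R)) (a : Fin n) :
    lucasRatio R A B (-a : Fin n) = -lucasRatio R A B a := by
  rcases eq_or_ne a 0 with rfl | ha
  · simp [lucasRatio_zero]
  have hval : ((-a : Fin n) : ℕ) = n - a := by
    have := Fin.val_ne_zero_iff.2 ha
    rw [Fin.val_neg', Nat.mod_eq_of_lt (by omega)]
  rw [hval]
  exact lucasRatio_sub_eq_neg A B a.isLt.le hun (isUnit_lucasU_val A B hunit ha)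
    (hval ▸ isUnit_lucasU_val A B hunit (neg_ne_zero.2 ha))

theorem lucasRatio_val_add {n : ℕ} [NeZero n] (hun : (lucasU A B n : R) = 0)
    (hunit : ∀ j ∈ Ico 1 n, IsUnit (lucasU A B j : R)) {a b : Fin n} (ha : a ≠ 0)
    (hb : b ≠ 0) (hab : a + b ≠ 0) :
    lucasRatio R A B (a + b : Fin n) * (lucasRatio R A B a + lucasRatio R A B b)
      = lucasRatio R A B a * lucasRatio R A B b + (A ^ 2 - 4 * B) := by
  have ha' := Fin.val_ne_zero_iff.2 ha
  have hb' := Fin.val_ne_zero_iff.2 hb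
  have hab' := Fin.val_ne_zero_iff.2 hab
  rw [Fin.val_add] at hab'
  -- If `a + b` wraps around `n`, pass to `-a, -b`, which do not.
  wlog hlt : (a : ℕ) + b < n generalizing a b
  · have hne : (a : ℕ) + b ≠ n := fun h => hab' (by rw [h, Nat.mod_self])
    have hvala : ((-a : Fin n) : ℕ) = n - a := by rw [Fin.val_neg', Nat.mod_eq_of_lt (by omega)]
    have hvalb : ((-b : Fin n) : ℕ) = n - b := by rw [Fin.val_neg', Nat.mod_eq_of_lt (by omega)]
    have := this (neg_ne_zero.2 ha) (neg_ne_zero.2 hb) (by rwa [← neg_add, neg_ne_zero])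
      (by omega) (by omega) (by rw [hvala, hvalb, Nat.mod_eq_of_lt (by omega)]; omega) (by omega)
    rw [← neg_add, lucasRatio_val_neg A B hun hunit, lucasRatio_val_neg A B hun hunit,
      lucasRatio_val_neg A B hun hunit] at this
    linear_combination this
  have hval : ((a + b : Fin n) : ℕ) = a + b := by rw [Fin.val_add, Nat.mod_eq_of_lt hlt]
  rw [hval]
  exact lucasRatio_add A B (isUnit_lucasU_val A B hunit ha) (isUnit_lucasU_val A B hunit hb)
    (hval ▸ isUnit_lucasU_val A B hunit hab)

theorem six_mul_lucasV_mul_sum_inverse_mul_inverse {n : ℕ} (hn : 0 < n)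
    (hun : (lucasU A B n : R) = 0) (hunit : ∀ j ∈ Ico 1 n, IsUnit (lucasU A B j : R))
    (h2 : IsUnit (2 : R)) :
    6 * (lucasV A B n : R) *
        ∑ j ∈ Ico 1 n, Ring.inverse (lucasU A B j : R) * Ring.inverse (lucasU A B (n - j) : R)
      = ((n : R) ^ 2 - 1) * (A ^ 2 - 4 * B) := by
  have : NeZero n := ⟨hn.ne'⟩
  have hsq := three_mul_sum_sq_of_cot_add (fun a : Fin n => lucasRatio R A B a) _ h2
    (lucasRatio_val_neg A B hun hunit) fun _ _ => lucasRatio_val_add A B hun hunit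
  rw [Fintype.card_fin, Fin.sum_univ_eq_sum_range (fun j => lucasRatio R A B j ^ 2),
    sum_range_eq_add_Ico _ hn, lucasRatio_zero] at hsq
  have hterm := sum_congr rfl fun j hj =>
    two_mul_lucasV_mul_inverse_mul_inverse A B (R := R) (mem_Ico.1 hj).2.le hun (hunit j hj)
      (hunit _ (by simp only [mem_Ico] at hj ⊢; omega))
  rw [← mul_sum, sum_sub_distrib, sum_const, Nat.card_Ico, nsmul_eq_mul,
    Nat.cast_sub (Nat.one_le_of_lt hn)] at hterm
  linear_combination 3 * hterm - hsq

theorem six_mul_lucasV_mul_sum_prod_erase_mul_prod_erase {n : ℕ} (hn : 0 < n)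
    (hun : (lucasU A B n : R) = 0) (hunit : ∀ j ∈ Ico 1 n, IsUnit (lucasU A B j : R))
    (h2 : IsUnit (2 : R)) :
    6 * (lucasV A B n : R) * ∑ j ∈ Ico 1 n,
        (∏ k ∈ (Ico 1 n).erase j, (lucasU A B k : R))
          * ∏ k ∈ (Ico 1 n).erase (n - j), (lucasU A B k : R)
      = ((n : R) ^ 2 - 1) * (A ^ 2 - 4 * B) * (∏ j ∈ Ico 1 n, (lucasU A B j : R)) ^ 2 := by
  have hprod : ∀ j ∈ Ico 1 n, ∏ k ∈ (Ico 1 n).erase j, (lucasU A B k : R)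
      = Ring.inverse (lucasU A B j : R) * ∏ k ∈ Ico 1 n, (lucasU A B k : R) := fun j hj => by
    rw [← mul_prod_erase _ _ hj, Ring.inverse_mul_cancel_left _ _ (hunit j hj)]
  rw [sum_congr rfl fun j hj => by
      rw [hprod j hj, hprod (n - j) (by simp only [mem_Ico] at hj ⊢; omega)],
    ← six_mul_lucasV_mul_sum_inverse_mul_inverse A B hn hun hunit h2, mul_sum, mul_sum, sum_mul]
  exact sum_congr rfl fun j _ => by ring

end Ratio

theorem sum_lucasV_mul_prod_erase_mul_prod (A B : ℤ) (n : ℕ) :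
    (∑ j ∈ Ico 1 n, lucasV A B j * ∏ k ∈ (Ico 1 n).erase j, lucasU A B k)
        * ∏ j ∈ Ico 1 n, lucasU A B j
      = lucasU A B n * ∑ j ∈ Ico 1 n,
          (∏ k ∈ (Ico 1 n).erase j, lucasU A B k)
            * ∏ k ∈ (Ico 1 n).erase (n - j), lucasU A B k := by
  set X : ℕ → ℤ := fun j =>
    (∏ k ∈ (Ico 1 n).erase j, lucasU A B k) * ∏ k ∈ (Ico 1 n).erase (n - j), lucasU A B k
  have hmem : ∀ j ∈ Ico 1 n, n - j ∈ Ico 1 n := fun j hj => by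
    simp only [mem_Ico] at hj ⊢; omega
  have hsub : ∀ j ∈ Ico 1 n, n - (n - j) = j := fun j hj => by
    simp only [mem_Ico] at hj; omega
  have hreflect : ∑ j ∈ Ico 1 n, lucasV A B (n - j) * lucasU A B j * X j
      = ∑ j ∈ Ico 1 n, lucasV A B j * lucasU A B (n - j) * X j := by
    have := sum_Ico_reflect (fun j => lucasV A B j * lucasU A B (n - j) * X j) 1 (Nat.le_succ n)
    rw [Nat.add_sub_cancel_left, Nat.add_sub_cancel] at this
    rw [← this]
    refine sum_congr rfl fun j hj => ?_
    simp only [X, hsub j hj, mul_comm (∏ k ∈ (Ico 1 n).erase (n - j), lucasU A B k)]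
  have hterm : ∀ j ∈ Ico 1 n, lucasV A B j * (∏ k ∈ (Ico 1 n).erase j, lucasU A B k)
      * ∏ k ∈ Ico 1 n, lucasU A B k = lucasV A B j * lucasU A B (n - j) * X j := fun j hj => by
    rw [← mul_prod_erase _ _ (hmem j hj)]
    ring
  apply mul_left_cancel₀ (two_ne_zero (α := ℤ))
  calc 2 * ((∑ j ∈ Ico 1 n, lucasV A B j * ∏ k ∈ (Ico 1 n).erase j, lucasU A B k)
        * ∏ j ∈ Ico 1 n, lucasU A B j)
      = ∑ j ∈ Ico 1 n, lucasV A B (n - j) * lucasU A B j * X j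
          + ∑ j ∈ Ico 1 n, lucasV A B j * lucasU A B (n - j) * X j := by
        rw [hreflect, two_mul, sum_mul, sum_congr rfl hterm]
    _ = ∑ j ∈ Ico 1 n,
          (lucasU A B j * lucasV A B (n - j) + lucasV A B j * lucasU A B (n - j)) * X j := by
        rw [← sum_add_distrib]
        exact sum_congr rfl fun j _ => by ring
    _ = 2 * (lucasU A B n * ∑ j ∈ Ico 1 n, X j) := by
        rw [mul_sum, mul_sum]
        refine sum_congr rfl fun j hj => ?_
        rw [← two_mul_lucasU_add, Nat.add_sub_cancel' (mem_Ico.1 hj).2.le]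
        ring

theorem isUnit_intCast_zmod_natAbs {w z : ℤ} (h : IsCoprime w z) : IsUnit (z : ZMod w.natAbs) :=
  (ZMod.coe_int_isUnit_iff_isCoprime z w.natAbs).2 (by rw [Int.natCast_natAbs]; exact h.abs_left)

section Divisibility

variable {A B : ℤ}

theorem isCoprime_B_of_dvd_lucasU {w : ℤ} {n : ℕ} (hn : 0 < n) (hwu : w ∣ lucasU A B n)
    (hwA : IsCoprime w A) : IsCoprime w B := by
  obtain ⟨c, hc⟩ := dvd_lucasU_succ_sub_pow A B (n - 1)
  obtain ⟨s, hs⟩ := hwu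
  rw [Nat.sub_add_cancel hn, hs] at hc
  have : IsCoprime w (B * -c + w * s) := by
    rw [show B * -c + w * s = A ^ (n - 1) by linear_combination hc]
    exact hwA.pow_right
  exact (IsCoprime.add_mul_left_right_iff.mp this).of_mul_right_left

theorem six_dvd_lucas_product (A B : ℤ) : 6 ∣ A * B * (A ^ 2 - B) * (A ^ 2 - 2 * B) := by
  have h : ∀ a b : ZMod 6, a * b * (a ^ 2 - b) * (a ^ 2 - 2 * b) = 0 := by decide
  exact_mod_cast (ZMod.intCast_zmod_eq_zero_iff_dvd _ 6).mp (by push_cast; exact h _ _)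

theorem isCoprime_six_of_isCoprime_lucasU {w : ℤ} (hA : IsCoprime w A) (hB : IsCoprime w B)
    (h3 : IsCoprime w (lucasU A B 3)) (h4 : IsCoprime w (lucasU A B 4)) : IsCoprime w 6 := by
  rw [lucasU_three] at h3
  rw [lucasU_four] at h4
  exact (((hA.mul_right hB).mul_right h3).mul_right h4.of_mul_right_right).of_isCoprime_of_dvd_right
    (six_dvd_lucas_product A B)

theorem isCoprime_lucasV_of_dvd_lucasU {w : ℤ} {n : ℕ} (hwu : w ∣ lucasU A B n)
    (h2 : IsCoprime w 2) (hB : IsCoprime w B) : IsCoprime w (lucasV A B n) := by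
  obtain ⟨s, hs⟩ := hwu
  have hsq : lucasV A B n ^ 2 = 4 * B ^ n + w * ((A ^ 2 - 4 * B) * s * lucasU A B n) := by
    linear_combination lucasV_sq_sub A B n + (A ^ 2 - 4 * B) * lucasU A B n * hs
  have h4 : IsCoprime w (4 * B ^ n) := by
    rw [show (4 : ℤ) = 2 * 2 by norm_num]
    exact (h2.mul_right h2).mul_right hB.pow_right
  rw [← IsCoprime.add_mul_left_right_iff (z := (A ^ 2 - 4 * B) * s * lucasU A B n), ← hsq] at h4
  exact h4.of_isCoprime_of_dvd_right (dvd_pow_self _ two_ne_zero)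

theorem dvd_six_mul_lucasV_mul_sum_prod_erase_mul_prod_erase_sub {w : ℤ} {n : ℕ} (hn : 0 < n)
    (hwu : w ∣ lucasU A B n) (hcop : ∀ j ∈ Ico 1 n, IsCoprime w (lucasU A B j))
    (h2 : IsCoprime w 2) :
    w ∣ 6 * lucasV A B n * (∑ j ∈ Ico 1 n,
          (∏ k ∈ (Ico 1 n).erase j, lucasU A B k)
            * ∏ k ∈ (Ico 1 n).erase (n - j), lucasU A B k)
        - ((n : ℤ) ^ 2 - 1) * (A ^ 2 - 4 * B) * (∏ j ∈ Ico 1 n, lucasU A B j) ^ 2 := by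
  rw [← Int.natAbs_dvd, ← ZMod.intCast_zmod_eq_zero_iff_dvd, Int.cast_sub, sub_eq_zero]
  have hun : (lucasU A B n : ZMod w.natAbs) = 0 :=
    (ZMod.intCast_zmod_eq_zero_iff_dvd _ _).2 (Int.natAbs_dvd.2 hwu)
  push_cast
  exact six_mul_lucasV_mul_sum_prod_erase_mul_prod_erase A B hn hun
    (fun j hj => isUnit_intCast_zmod_natAbs (hcop j hj))
    (by exact_mod_cast isUnit_intCast_zmod_natAbs h2)

theorem sq_dvd_six_mul_lucasV_mul_sum_sub {w : ℤ} {n : ℕ} (hn : 0 < n)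
    (hwu : w ∣ lucasU A B n) (hcop : ∀ j ∈ Ico 1 n, IsCoprime w (lucasU A B j))
    (h2 : IsCoprime w 2) :
    w ^ 2 ∣ 6 * lucasV A B n *
          (∑ j ∈ Ico 1 n, lucasV A B j * ∏ k ∈ (Ico 1 n).erase j, lucasU A B k)
        - ((n : ℤ) ^ 2 - 1) * (A ^ 2 - 4 * B) * lucasU A B n
            * ∏ j ∈ Ico 1 n, lucasU A B j := by
  refine (IsCoprime.prod_right hcop).pow_left.dvd_of_dvd_mul_right ?_
  obtain ⟨b, hb⟩ := dvd_six_mul_lucasV_mul_sum_prod_erase_mul_prod_erase_sub hn hwu hcop h2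
  obtain ⟨a, ha⟩ := hwu
  -- The left side times `∏ u_j` factors as `u_n` times the quantity of `hb`.
  exact ⟨a * b, by
    linear_combination 6 * lucasV A B n * sum_lucasV_mul_prod_erase_mul_prod A B n
      + lucasU A B n * hb + w * b * ha⟩

end Divisibility

theorem main_congruence_general (A B : ℤ) (n : ℕ) (hn : 5 ≤ n)
    (w : ℤ) (hw : IsWn A B n w) :
    IsCoprime w (lucasV A B n * ∏ j ∈ Finset.Icc 1 (n - 1), lucasU A B j) ∧
    IsCoprime w (6 : ℤ) ∧
    w ^ 2 ∣
      6 * lucasV A B n *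
          (∑ j ∈ Finset.Icc 1 (n - 1),
            lucasV A B j * ∏ k ∈ (Finset.Icc 1 (n - 1)).erase j, lucasU A B k)
        - ((n : ℤ) ^ 2 - 1) * (A ^ 2 - 4 * B) * lucasU A B n *
            ∏ j ∈ Finset.Icc 1 (n - 1), lucasU A B j := by
  obtain ⟨-, hwu, hcop, -⟩ := hw
  have hwA : IsCoprime w A := lucasU_two A B ▸ hcop 2 (by omega) (by omega)
  have hwB : IsCoprime w B := isCoprime_B_of_dvd_lucasU (by omega) hwu hwA
  have hw6 : IsCoprime w 6 := isCoprime_six_of_isCoprime_lucasU hwA hwB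
    (hcop 3 (by omega) (by omega)) (hcop 4 (by omega) (by omega))
  have hw2 : IsCoprime w 2 := hw6.of_isCoprime_of_dvd_right (by norm_num)
  have hcop' : ∀ j ∈ Ico 1 n, IsCoprime w (lucasU A B j) := fun j hj =>
    hcop j (mem_Ico.1 hj).1 (mem_Ico.1 hj).2
  rw [Icc_sub_one_right_eq_Ico_of_not_isMin (not_isMin_of_lt (by omega : 0 < n))]
  exact ⟨(isCoprime_lucasV_of_dvd_lucasU hwu hw2 hwB).mul_right (IsCoprime.prod_right hcop'), hw6,
    sq_dvd_six_mul_lucasV_mul_sum_sub (by omega) hwu hcop' hw2⟩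

theorem main_congruence (A B : ℤ) (hA : A ≠ 0) (hB : B ≠ 0) (n : ℕ) (hn : 5 ≤ n)
    (w : ℤ) (hw : IsWn A B n w) :
    IsCoprime w (lucasV A B n * ∏ j ∈ Finset.Icc 1 (n - 1), lucasU A B j) ∧
    IsCoprime w (6 : ℤ) ∧
    w ^ 2 ∣
      6 * lucasV A B n *
          (∑ j ∈ Finset.Icc 1 (n - 1),
            lucasV A B j * ∏ k ∈ (Finset.Icc 1 (n - 1)).erase j, lucasU A B k)
        - ((n : ℤ) ^ 2 - 1) * (A ^ 2 - 4 * B) * lucasU A B n *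
            ∏ j ∈ Finset.Icc 1 (n - 1), lucasU A B j :=
  main_congruence_general A B n hn w hw
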